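/- If g ∈ nV has finite order p, then there exists a dyadic block B of C^n that is admissible for g and satisfies g(B) = B (as a partition, g permutes the members of B). -/
import Mathlib


/-! Common definitions: Cantor set, cylinders, dyadic blocks, Brin–Thompson group `nV`. -/

/-- The Cantor set, identified with the space of infinite binary sequences. -/
abbrev Cantor : Type := ℕ → Bool

/-- Prepend a finite binary word to an infinite binary sequence. -/
def wordAppend (α : List Bool) (ω : Cantor) : Cantor :=
  fun i => if h : i < α.length then α.get ⟨i, h⟩ else ω (i - α.length)

/-- The dyadic subinterval (cylinder set) of the Cantor set determined by the
finite binary word `α`: all sequences having `α` as a prefix. -/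
def cylinder (α : List Bool) : Set Cantor := Set.range (wordAppend α)

/-- The dyadic subblock of `C^n` given by a tuple of finite binary words. -/
def prodCylinder {n : ℕ} (α : Fin n → List Bool) : Set (Fin n → Cantor) :=
  Set.univ.pi fun k => cylinder (α k)

/-- A subset of `C^n` is a dyadic subblock if it is a product of cylinder sets. -/
def IsDyadicSubblock {n : ℕ} (B : Set (Fin n → Cantor)) : Prop :=
  ∃ α : Fin n → List Bool, B = prodCylinder α

/-- A dyadic block: a finite partition of `C^n` into dyadic subblocks. -/
structure DyadicBlock (n : ℕ) where
  blocks : Finset (Set (Fin n → Cantor))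
  isSubblock : ∀ B ∈ blocks, IsDyadicSubblock B
  nonempty : ∀ B ∈ blocks, B.Nonempty
  pairwiseDisjoint : (blocks : Set (Set (Fin n → Cantor))).PairwiseDisjoint id
  covers : ⋃₀ (blocks : Set (Set (Fin n → Cantor))) = Set.univ

/-- Refinement relation between (finite collections of) subblocks:
every member of `A` is contained in some member of `A'`. -/
def RefinesF {X : Type*} (A A' : Finset (Set X)) : Prop :=
  ∀ B ∈ A, ∃ C ∈ A', B ⊆ C

/-- `X` refines `Y` (`X ⪰ Y`): every member of `X` is contained in a member of `Y`. -/
def Refines {n : ℕ} (X Y : DyadicBlock n) : Prop := RefinesF X.blocks Y.blocks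

open Classical in
/-- The common refinement at the level of finite collections of sets:
all nonempty pairwise intersections. -/
noncomputable def wedgeF {X : Type*} (A B : Finset (Set X)) : Finset (Set X) :=
  (Finset.image₂ (· ∩ ·) A B).filter fun S => S.Nonempty

/-- `g` sends the subblock with prefix tuple `α` to the one with prefix tuple `β`
by the canonical (prefix-replacing, i.e. coordinatewise affine) homeomorphism. -/
def MapsCanonically {n : ℕ} (g : Equiv.Perm (Fin n → Cantor))
    (α β : Fin n → List Bool) : Prop :=
  ∀ ω : Fin n → Cantor,
    g (fun k => wordAppend (α k) (ω k)) = fun k => wordAppend (β k) (ω k)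

/-- A finite collection of subblocks is admissible for `g` if `g` maps each member
canonically (affinely, coordinate-preserving) onto a dyadic subblock. -/
def AdmissibleF {n : ℕ} (g : Equiv.Perm (Fin n → Cantor))
    (A : Finset (Set (Fin n → Cantor))) : Prop :=
  ∀ B ∈ A, ∃ α β : Fin n → List Bool, B = prodCylinder α ∧ MapsCanonically g α β

/-- A dyadic block `X` is admissible for `g`. -/
def Admissible {n : ℕ} (g : Equiv.Perm (Fin n → Cantor)) (X : DyadicBlock n) : Prop :=
  AdmissibleF g X.blocks

/-- The image collection `g(A)` of a collection of subblocks. -/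
noncomputable def imageF {n : ℕ} (g : Equiv.Perm (Fin n → Cantor))
    (A : Finset (Set (Fin n → Cantor))) : Finset (Set (Fin n → Cantor)) :=
  open Classical in A.image (Set.image ⇑g)

/-- `g` is an element of the Brin–Thompson group `nV`: some dyadic block is
admissible for it. -/
def InBrinThompson {n : ℕ} (g : Equiv.Perm (Fin n → Cantor)) : Prop :=
  ∃ X : DyadicBlock n, Admissible g X

/-- The Brin–Thompson group `nV`, as a subgroup of the permutations of `C^n`
(the set of elements admitting an admissible dyadic block is closed under the
group operations, so the closure is exactly that set). -/
def BrinThompson (n : ℕ) : Subgroup (Equiv.Perm (Fin n → Cantor)) :=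
  Subgroup.closure {g | InBrinThompson g}

/-- A collection of subblocks is invariant under `g`: admissible and `g` permutes
its members. -/
def InvariantF {n : ℕ} (g : Equiv.Perm (Fin n → Cantor))
    (A : Finset (Set (Fin n → Cantor))) : Prop :=
  AdmissibleF g A ∧ imageF g A = A

/-- A dyadic block invariant under `g`. -/
def Invariant {n : ℕ} (g : Equiv.Perm (Fin n → Cantor)) (X : DyadicBlock n) : Prop :=
  InvariantF g X.blocks

/-! ### Auxiliary lemmas -/

section Aux

variable {n : ℕ}

lemma wordAppend_append (a b : List Bool) (ω : Cantor) :
    wordAppend (a ++ b) ω = wordAppend a (wordAppend b ω) := by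
  funext i
  simp only [wordAppend, List.length_append, List.get_eq_getElem]
  by_cases h1 : i < a.length
  · rw [dif_pos (by omega), dif_pos h1, List.getElem_append_left h1]
  · rw [dif_neg h1]
    by_cases h2 : i < a.length + b.length
    · rw [dif_pos h2, dif_pos (by omega), List.getElem_append_right (by omega)]
    · rw [dif_neg h2, dif_neg (by omega)]
      congr 1
      omega

lemma mem_cylinder_self (a : List Bool) (ω : Cantor) : wordAppend a ω ∈ cylinder a :=
  ⟨ω, rfl⟩

lemma cylinder_nonempty (a : List Bool) : (cylinder a).Nonempty :=
  ⟨_, mem_cylinder_self a fun _ => false⟩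

lemma cylinder_subset_of_prefix {a b : List Bool} (h : a <+: b) :
    cylinder b ⊆ cylinder a := by
  obtain ⟨t, rfl⟩ := h
  rintro x ⟨ω, rfl⟩
  rw [wordAppend_append]
  exact ⟨_, rfl⟩

lemma wordAppend_apply_lt (a : List Bool) (ω : Cantor) {i : ℕ} (h : i < a.length) :
    wordAppend a ω i = a[i] := by
  simp [wordAppend, h]

lemma wordAppend_apply_ge (a : List Bool) (ω : Cantor) {i : ℕ} (h : ¬ i < a.length) :
    wordAppend a ω i = ω (i - a.length) := by
  simp [wordAppend, h]

lemma prefix_of_cylinder_subset {a b : List Bool} (h : cylinder b ⊆ cylinder a) :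
    a <+: b := by
  obtain ⟨ω1, e1⟩ := h (mem_cylinder_self b fun _ => false)
  obtain ⟨ω2, e2⟩ := h (mem_cylinder_self b fun _ => true)
  have hlen : a.length ≤ b.length := by
    by_contra hlen
    have h1 := congrFun e1 b.length
    have h2 := congrFun e2 b.length
    rw [wordAppend_apply_lt a ω1 (by omega), wordAppend_apply_ge b _ (by omega)] at h1
    rw [wordAppend_apply_lt a ω2 (by omega), wordAppend_apply_ge b _ (by omega)] at h2
    rw [h1] at h2
    exact Bool.false_ne_true h2
  rw [List.prefix_iff_eq_take]
  apply List.ext_getElem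
  · simp [hlen]
  · intro i hi _
    have h1 := congrFun e1 i
    rw [wordAppend_apply_lt a ω1 (by omega), wordAppend_apply_lt b _ (by omega)] at h1
    simp only [List.getElem_take]
    exact h1

lemma prefix_or_of_cylinder_inter_nonempty {a b : List Bool}
    (h : (cylinder a ∩ cylinder b).Nonempty) : a <+: b ∨ b <+: a := by
  obtain ⟨x, ⟨ω1, e1⟩, ⟨ω2, e2⟩⟩ := h
  rcases le_or_gt a.length b.length with hab | hab
  · left
    rw [List.prefix_iff_eq_take]
    apply List.ext_getElem
    · simp; omega
    · intro i hi _
      have h1 := congrFun e1 i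
      have h2 := congrFun e2 i
      rw [wordAppend_apply_lt a ω1 (by omega)] at h1
      rw [wordAppend_apply_lt b ω2 (by omega)] at h2
      simp only [List.getElem_take]
      rw [h1, h2]
  · right
    rw [List.prefix_iff_eq_take]
    apply List.ext_getElem
    · simp; omega
    · intro i hi _
      have h1 := congrFun e1 i
      have h2 := congrFun e2 i
      rw [wordAppend_apply_lt a ω1 (by omega)] at h1
      rw [wordAppend_apply_lt b ω2 (by omega)] at h2
      simp only [List.getElem_take]
      rw [h1, h2]

lemma cylinder_inter_of_nonempty {a b : List Bool}
    (h : (cylinder a ∩ cylinder b).Nonempty) :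
    cylinder a ∩ cylinder b = cylinder (if a.length ≤ b.length then b else a) := by
  rcases prefix_or_of_cylinder_inter_nonempty h with hp | hp
  · rw [if_pos hp.length_le]
    exact Set.inter_eq_self_of_subset_right (cylinder_subset_of_prefix hp)
  · by_cases hl : a.length ≤ b.length
    · have : b = a := List.IsPrefix.eq_of_length_le hp hl
      subst this
      simp
    · rw [if_neg hl]
      exact Set.inter_eq_self_of_subset_left (cylinder_subset_of_prefix hp)

end Aux
section Aux2

variable {n : ℕ}

/-- Coordinatewise concatenation of word tuples. -/
def wcat (α γ : Fin n → List Bool) : Fin n → List Bool := fun k => α k ++ γ k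

lemma mem_prodCylinder {α : Fin n → List Bool} {f : Fin n → Cantor} :
    f ∈ prodCylinder α ↔ ∃ ω : Fin n → Cantor, f = fun k => wordAppend (α k) (ω k) := by
  constructor
  · intro hf
    have : ∀ k, ∃ ω, wordAppend (α k) ω = f k := fun k => hf k (Set.mem_univ k)
    choose ω hω using this
    exact ⟨ω, by funext k; exact (hω k).symm⟩
  · rintro ⟨ω, rfl⟩
    intro k _
    exact ⟨ω k, rfl⟩

lemma prodCylinder_nonempty (α : Fin n → List Bool) : (prodCylinder α).Nonempty :=
  ⟨fun k => wordAppend (α k) fun _ => false, mem_prodCylinder.2 ⟨fun _ _ => false, rfl⟩⟩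

lemma cylinder_subset_of_prodCylinder_subset {α μ : Fin n → List Bool}
    (h : prodCylinder μ ⊆ prodCylinder α) (k : Fin n) :
    cylinder (μ k) ⊆ cylinder (α k) := by
  intro y hy
  set f : Fin n → Cantor :=
    Function.update (fun j => wordAppend (μ j) fun _ => false) k y with hf
  have hfμ : f ∈ prodCylinder μ := by
    intro j _
    by_cases hj : j = k
    · subst hj; simpa [hf] using hy
    · simpa [hf, Function.update_of_ne hj] using mem_cylinder_self (μ j) _
  have := h hfμ k (Set.mem_univ k)
  simpa [hf] using this

lemma exists_wcat_of_prodCylinder_subset {α μ : Fin n → List Bool}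
    (h : prodCylinder μ ⊆ prodCylinder α) :
    ∃ γ : Fin n → List Bool, μ = wcat α γ := by
  have hp : ∀ k, α k <+: μ k := fun k =>
    prefix_of_cylinder_subset (cylinder_subset_of_prodCylinder_subset h k)
  choose t ht using fun k => hp k
  exact ⟨t, by funext k; exact (ht k).symm⟩

lemma prodCylinder_wcat_subset (α γ : Fin n → List Bool) :
    prodCylinder (wcat α γ) ⊆ prodCylinder α := fun f hf k hk =>
  cylinder_subset_of_prefix ⟨γ k, rfl⟩ (hf k hk)

lemma prodCylinder_inter_nonempty {α β : Fin n → List Bool}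
    (h : (prodCylinder α ∩ prodCylinder β).Nonempty) :
    ∃ μ, prodCylinder α ∩ prodCylinder β = prodCylinder μ := by
  refine ⟨fun k => if (α k).length ≤ (β k).length then β k else α k, ?_⟩
  have hne : ∀ k, (cylinder (α k) ∩ cylinder (β k)).Nonempty := by
    obtain ⟨x, hx1, hx2⟩ := h
    exact fun k => ⟨x k, hx1 k (Set.mem_univ k), hx2 k (Set.mem_univ k)⟩
  rw [prodCylinder, prodCylinder, prodCylinder, ← Set.pi_inter_distrib]
  exact Set.pi_congr rfl fun k _ => cylinder_inter_of_nonempty (hne k)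

lemma mapsCanonically_one (α : Fin n → List Bool) :
    MapsCanonically 1 α α := fun ω => rfl

lemma mapsCanonically_image {g : Equiv.Perm (Fin n → Cantor)} {α β : Fin n → List Bool}
    (h : MapsCanonically g α β) : ⇑g '' prodCylinder α = prodCylinder β := by
  ext y
  constructor
  · rintro ⟨x, hx, rfl⟩
    obtain ⟨ω, rfl⟩ := mem_prodCylinder.1 hx
    rw [h ω]
    exact mem_prodCylinder.2 ⟨ω, rfl⟩
  · intro hy
    obtain ⟨ω, rfl⟩ := mem_prodCylinder.1 hy
    exact ⟨fun k => wordAppend (α k) (ω k), mem_prodCylinder.2 ⟨ω, rfl⟩, h ω⟩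

lemma mapsCanonically_wcat {g : Equiv.Perm (Fin n → Cantor)} {α β : Fin n → List Bool}
    (h : MapsCanonically g α β) (γ : Fin n → List Bool) :
    MapsCanonically g (wcat α γ) (wcat β γ) := by
  intro ω
  have := h fun k => wordAppend (γ k) (ω k)
  simpa [wcat, wordAppend_append] using this

lemma mapsCanonically_inv {g : Equiv.Perm (Fin n → Cantor)} {α β : Fin n → List Bool}
    (h : MapsCanonically g α β) : MapsCanonically g⁻¹ β α := by
  intro ω
  rw [← h ω]
  simp

lemma mapsCanonically_mul {g h : Equiv.Perm (Fin n → Cantor)} {α β γ : Fin n → List Bool}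
    (hh : MapsCanonically h α β) (hg : MapsCanonically g β γ) :
    MapsCanonically (g * h) α γ := by
  intro ω
  simp only [Equiv.Perm.mul_apply, hh ω, hg ω]

end Aux2
section Blocks

variable {n : ℕ}

lemma mem_wedgeF {A B : Finset (Set (Fin n → Cantor))} {S : Set (Fin n → Cantor)} :
    S ∈ wedgeF A B ↔ (∃ a ∈ A, ∃ b ∈ B, a ∩ b = S) ∧ S.Nonempty := by
  simp [wedgeF, Finset.mem_filter, Finset.mem_image₂]

/-- The common refinement of two dyadic blocks. -/
noncomputable def wedgeBlock (X Y : DyadicBlock n) : DyadicBlock n where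
  blocks := wedgeF X.blocks Y.blocks
  isSubblock := by
    intro S hS
    obtain ⟨⟨a, ha, b, hb, rfl⟩, hne⟩ := mem_wedgeF.1 hS
    obtain ⟨α, rfl⟩ := X.isSubblock a ha
    obtain ⟨β, rfl⟩ := Y.isSubblock b hb
    obtain ⟨μ, hμ⟩ := prodCylinder_inter_nonempty hne
    exact ⟨μ, hμ⟩
  nonempty := fun S hS => (mem_wedgeF.1 hS).2
  pairwiseDisjoint := by
    intro S hS T hT hST
    obtain ⟨⟨a, ha, b, hb, rfl⟩, _⟩ := mem_wedgeF.1 hS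
    obtain ⟨⟨a', ha', b', hb', rfl⟩, _⟩ := mem_wedgeF.1 hT
    simp only [Function.onFun, id_eq]
    rw [Set.disjoint_left]
    rintro x ⟨hxa, hxb⟩ ⟨hxa', hxb'⟩
    have hae : a = a' := by
      by_contra hne
      exact Set.disjoint_left.1 (X.pairwiseDisjoint ha ha' hne) hxa hxa'
    have hbe : b = b' := by
      by_contra hne
      exact Set.disjoint_left.1 (Y.pairwiseDisjoint hb hb' hne) hxb hxb'
    exact hST (by rw [hae, hbe])
  covers := by
    apply Set.eq_univ_of_forall
    intro x
    have hx : x ∈ ⋃₀ (X.blocks : Set (Set (Fin n → Cantor))) := X.covers ▸ Set.mem_univ x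
    have hy : x ∈ ⋃₀ (Y.blocks : Set (Set (Fin n → Cantor))) := Y.covers ▸ Set.mem_univ x
    obtain ⟨a, ha, hxa⟩ := hx
    obtain ⟨b, hb, hxb⟩ := hy
    exact ⟨a ∩ b, mem_wedgeF.2 ⟨⟨a, ha, b, hb, rfl⟩, ⟨x, hxa, hxb⟩⟩, hxa, hxb⟩

lemma wedgeBlock_refines_left (X Y : DyadicBlock n) :
    RefinesF (wedgeBlock X Y).blocks X.blocks := by
  intro S hS
  obtain ⟨⟨a, ha, b, hb, rfl⟩, _⟩ := mem_wedgeF.1 hS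
  exact ⟨a, ha, Set.inter_subset_left⟩

lemma wedgeBlock_refines_right (X Y : DyadicBlock n) :
    RefinesF (wedgeBlock X Y).blocks Y.blocks := by
  intro S hS
  obtain ⟨⟨a, ha, b, hb, rfl⟩, _⟩ := mem_wedgeF.1 hS
  exact ⟨b, hb, Set.inter_subset_right⟩

lemma mem_imageF {f : Equiv.Perm (Fin n → Cantor)} {A : Finset (Set (Fin n → Cantor))}
    {S : Set (Fin n → Cantor)} :
    S ∈ imageF f A ↔ ∃ B ∈ A, ⇑f '' B = S := by
  simp [imageF]

/-- The image of a block under a permutation that is admissible on it. -/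
noncomputable def imageBlock (f : Equiv.Perm (Fin n → Cantor)) (X : DyadicBlock n)
    (hf : AdmissibleF f X.blocks) : DyadicBlock n where
  blocks := imageF f X.blocks
  isSubblock := by
    intro S hS
    obtain ⟨B, hB, rfl⟩ := mem_imageF.1 hS
    obtain ⟨α, β, rfl, hc⟩ := hf B hB
    exact ⟨β, mapsCanonically_image hc⟩
  nonempty := by
    intro S hS
    obtain ⟨B, hB, rfl⟩ := mem_imageF.1 hS
    exact (X.nonempty B hB).image _
  pairwiseDisjoint := by
    intro S hS T hT hST
    obtain ⟨B, hB, rfl⟩ := mem_imageF.1 hS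
    obtain ⟨C, hC, rfl⟩ := mem_imageF.1 hT
    have hBC : B ≠ C := fun h => hST (by rw [h])
    exact (Set.disjoint_image_iff f.injective).2 (X.pairwiseDisjoint hB hC hBC)
  covers := by
    apply Set.eq_univ_of_forall
    intro x
    have hx : f.symm x ∈ ⋃₀ (X.blocks : Set (Set (Fin n → Cantor))) :=
      X.covers ▸ Set.mem_univ _
    obtain ⟨B, hB, hxB⟩ := hx
    exact ⟨⇑f '' B, mem_imageF.2 ⟨B, hB, rfl⟩, ⟨f.symm x, hxB, f.apply_symm_apply x⟩⟩

lemma admissibleF_one (X : DyadicBlock n) : AdmissibleF 1 X.blocks := by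
  intro B hB
  obtain ⟨α, rfl⟩ := X.isSubblock B hB
  exact ⟨α, α, rfl, mapsCanonically_one α⟩

lemma admissibleF_of_refines {f : Equiv.Perm (Fin n → Cantor)}
    {A : Finset (Set (Fin n → Cantor))} (hA : AdmissibleF f A)
    (Z : DyadicBlock n) (hr : RefinesF Z.blocks A) : AdmissibleF f Z.blocks := by
  intro S hS
  obtain ⟨μ, rfl⟩ := Z.isSubblock S hS
  obtain ⟨C, hC, hsub⟩ := hr _ hS
  obtain ⟨α, β, rfl, hc⟩ := hA C hC
  obtain ⟨γ, rfl⟩ := exists_wcat_of_prodCylinder_subset hsub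
  exact ⟨wcat α γ, wcat β γ, rfl, mapsCanonically_wcat hc γ⟩

lemma admissibleF_inv {g : Equiv.Perm (Fin n → Cantor)} {X : DyadicBlock n}
    (hX : AdmissibleF g X.blocks) : AdmissibleF g⁻¹ (imageF g X.blocks) := by
  intro S hS
  obtain ⟨B, hB, rfl⟩ := mem_imageF.1 hS
  obtain ⟨α, β, rfl, hc⟩ := hX B hB
  exact ⟨β, α, mapsCanonically_image hc, mapsCanonically_inv hc⟩

/-- Key construction: a block admissible for `g * h` refining the block of `h`. -/
lemma mul_admissibleF {g h : Equiv.Perm (Fin n → Cantor)} {X Y : DyadicBlock n}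
    (hX : AdmissibleF g X.blocks) (hY : AdmissibleF h Y.blocks) :
    ∃ W : DyadicBlock n, AdmissibleF (g * h) W.blocks ∧ RefinesF W.blocks Y.blocks := by
  let hYblk := imageBlock h Y hY
  let Z := wedgeBlock hYblk X
  have hinvZ : AdmissibleF h⁻¹ Z.blocks :=
    admissibleF_of_refines (admissibleF_inv hY) Z (wedgeBlock_refines_left _ _)
  refine ⟨imageBlock h⁻¹ Z hinvZ, ?_, ?_⟩
  · intro S hS
    obtain ⟨T, hT, rfl⟩ := mem_imageF.1 hS
    -- T is a member of Z, contained in a member of h(Y) and a member of X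
    obtain ⟨hb, hbY, hTsub⟩ := wedgeBlock_refines_left hYblk X T hT
    obtain ⟨c, hcX, hTsubX⟩ := wedgeBlock_refines_right hYblk X T hT
    obtain ⟨B, hBY, rfl⟩ := mem_imageF.1 hbY
    obtain ⟨α, β, rfl, hcan⟩ := hY B hBY
    obtain ⟨δ, ε, rfl, hcang⟩ := hX c hcX
    obtain ⟨μ, rfl⟩ := Z.isSubblock T hT
    rw [mapsCanonically_image hcan] at hTsub
    obtain ⟨γ, rfl⟩ := exists_wcat_of_prodCylinder_subset hTsub
    obtain ⟨γ', hμ'⟩ := exists_wcat_of_prodCylinder_subset hTsubX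
    have h1 : MapsCanonically h (wcat α γ) (wcat β γ) := mapsCanonically_wcat hcan γ
    have h2 : MapsCanonically g (wcat β γ) (wcat ε γ') := by
      rw [hμ']
      exact mapsCanonically_wcat hcang γ'
    refine ⟨wcat α γ, wcat ε γ', ?_, mapsCanonically_mul h1 h2⟩
    exact mapsCanonically_image (mapsCanonically_inv h1)
  · intro S hS
    obtain ⟨T, hT, rfl⟩ := mem_imageF.1 hS
    obtain ⟨hb, hbY, hTsub⟩ := wedgeBlock_refines_left hYblk X T hT
    obtain ⟨B, hBY, rfl⟩ := mem_imageF.1 hbY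
    refine ⟨B, hBY, ?_⟩
    intro x hx
    obtain ⟨t, ht, rfl⟩ := hx
    obtain ⟨b, hbB, hbt⟩ := hTsub ht
    subst hbt
    simpa using hbB
  
end Blocks
section Main

variable {n : ℕ}

lemma cylinder_nil : cylinder ([] : List Bool) = Set.univ := by
  apply Set.eq_univ_of_forall
  intro ω
  exact ⟨ω, by funext i; simp [wordAppend]⟩

lemma prodCylinder_nil : prodCylinder (fun _ : Fin n => ([] : List Bool)) = Set.univ := by
  simp [prodCylinder, cylinder_nil]

noncomputable def trivialBlock (n : ℕ) : DyadicBlock n where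
  blocks := {Set.univ}
  isSubblock := by
    intro B hB
    simp only [Finset.mem_singleton] at hB
    subst hB
    exact ⟨_, prodCylinder_nil.symm⟩
  nonempty := by
    intro B hB
    simp only [Finset.mem_singleton] at hB
    subst hB
    exact ⟨fun _ _ => false, trivial⟩
  pairwiseDisjoint := by simp
  covers := by simp

lemma inBT_one : InBrinThompson (1 : Equiv.Perm (Fin n → Cantor)) :=
  ⟨trivialBlock n, admissibleF_one _⟩

lemma inBT_mul {g h : Equiv.Perm (Fin n → Cantor)} (hg : InBrinThompson g)
    (hh : InBrinThompson h) : InBrinThompson (g * h) := by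
  obtain ⟨X, hX⟩ := hg
  obtain ⟨Y, hY⟩ := hh
  obtain ⟨W, hW, -⟩ := mul_admissibleF hX hY
  exact ⟨W, hW⟩

lemma inBT_inv {g : Equiv.Perm (Fin n → Cantor)} (hg : InBrinThompson g) :
    InBrinThompson g⁻¹ := by
  obtain ⟨X, hX⟩ := hg
  exact ⟨imageBlock g X hX, admissibleF_inv hX⟩

/-- The set of elements with an admissible block is a subgroup. -/
def BTsub (n : ℕ) : Subgroup (Equiv.Perm (Fin n → Cantor)) where
  carrier := {g | InBrinThompson g}
  one_mem' := inBT_one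
  mul_mem' := fun ha hb => inBT_mul ha hb
  inv_mem' := fun ha => inBT_inv ha

lemma inBT_of_mem_closure {g : Equiv.Perm (Fin n → Cantor)} (hg : g ∈ BrinThompson n) :
    InBrinThompson g := by
  have hle : BrinThompson n ≤ BTsub n :=
    (Subgroup.closure_le (BTsub n)).2 fun _ h => h
  exact hle hg

lemma powers_admissible {g : Equiv.Perm (Fin n → Cantor)} (X : DyadicBlock n)
    (hX : AdmissibleF g X.blocks) (m : ℕ) :
    ∃ V : DyadicBlock n, ∀ i ≤ m, AdmissibleF (g ^ i) V.blocks := by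
  induction m with
  | zero =>
    refine ⟨X, ?_⟩
    intro i hi
    obtain rfl : i = 0 := Nat.le_zero.1 hi
    rw [pow_zero]
    exact admissibleF_one X
  | succ m ih =>
    obtain ⟨V, hV⟩ := ih
    obtain ⟨W, hW, hWr⟩ := mul_admissibleF (g := g) (h := g ^ m) hX (hV m le_rfl)
    refine ⟨W, ?_⟩
    intro i hi
    rcases Nat.lt_or_ge i (m + 1) with h | h
    · exact admissibleF_of_refines (hV i (by omega)) W hWr
    · obtain rfl : i = m + 1 := by omega
      rw [pow_succ']
      exact hW

lemma iInter_prodCylinder (m : ℕ) :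
    ∀ (δ : Fin (m + 1) → Fin n → List Bool),
    (⋂ i, prodCylinder (δ i)).Nonempty →
    ∃ μ, (⋂ i, prodCylinder (δ i)) = prodCylinder μ := by
  induction m with
  | zero =>
    intro δ _
    refine ⟨δ 0, Set.eq_of_subset_of_subset (Set.iInter_subset _ 0) ?_⟩
    exact Set.subset_iInter fun i => by rw [Fin.fin_one_eq_zero i]
  | succ m ih =>
    intro δ hne
    have hsplit : (⋂ i, prodCylinder (δ i)) =
        prodCylinder (δ 0) ∩ ⋂ i : Fin (m + 1), prodCylinder (δ i.succ) := by
      ext x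
      simp only [Set.mem_iInter, Set.mem_inter_iff]
      exact ⟨fun h => ⟨h 0, fun i => h i.succ⟩, fun h i => Fin.cases h.1 h.2 i⟩
    rw [hsplit] at hne ⊢
    obtain ⟨μ', hμ'⟩ := ih (fun i => δ i.succ)
      (Set.Nonempty.mono Set.inter_subset_right hne)
    rw [hμ'] at hne ⊢
    exact prodCylinder_inter_nonempty hne

end Main
section Final

variable {n : ℕ}

lemma invariant_block_of_powers {g : Equiv.Perm (Fin n → Cantor)} (m : ℕ)
    (hgp : g ^ (m + 1) = 1) (V : DyadicBlock n)
    (hV : ∀ i ≤ m + 1, AdmissibleF (g ^ i) V.blocks) :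
    ∃ B : DyadicBlock n, Invariant g B := by
  classical
  set F : (Fin (m + 1) → Set (Fin n → Cantor)) → Set (Fin n → Cantor) :=
    fun B => ⋂ i : Fin (m + 1), ⇑(g ^ (i : ℕ)) '' B i with hF
  set Wb : Finset (Set (Fin n → Cantor)) :=
    ((Fintype.piFinset fun _ : Fin (m + 1) => V.blocks).image F).filter
      (fun S => S.Nonempty) with hWb
  have hmem : ∀ S, S ∈ Wb ↔
      S.Nonempty ∧ ∃ B, (∀ i, B i ∈ V.blocks) ∧ F B = S := by
    intro S
    simp only [hWb, Finset.mem_filter, Finset.mem_image, Fintype.mem_piFinset]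
    tauto
  have fact1 : ∀ B : Fin (m + 1) → Set (Fin n → Cantor), (∀ i, B i ∈ V.blocks) →
      (F B).Nonempty → IsDyadicSubblock (F B) := by
    intro B hB hne
    have hbi : ∀ i : Fin (m + 1), ∃ β, ⇑(g ^ (i : ℕ)) '' B i = prodCylinder β := by
      intro i
      obtain ⟨α, β, hα, hc⟩ := hV (i : ℕ) (by omega) (B i) (hB i)
      exact ⟨β, by rw [hα, mapsCanonically_image hc]⟩
    choose β hβ using hbi
    have hrw : F B = ⋂ i, prodCylinder (β i) := Set.iInter_congr hβ
    rw [hrw] at hne ⊢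
    exact iInter_prodCylinder m β hne
  have fact2 : ∀ B : Fin (m + 1) → Set (Fin n → Cantor),
      ⇑g '' F B = F (fun j => B (j - 1)) := by
    intro B
    have h1 : ⇑g '' F B = ⋂ i : Fin (m + 1), ⇑(g ^ ((i : ℕ) + 1)) '' B i := by
      rw [hF]
      rw [Set.image_iInter g.bijective]
      refine Set.iInter_congr fun i => ?_
      rw [pow_succ', Equiv.Perm.coe_mul, Set.image_comp]
    have hval : ∀ i : Fin (m + 1),
        ⇑(g ^ (((i + 1 : Fin (m + 1))) : ℕ)) '' B i = ⇑(g ^ ((i : ℕ) + 1)) '' B i := by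
      intro i
      by_cases hi : i = Fin.last m
      · subst hi
        have h0 : ((Fin.last m + 1 : Fin (m + 1)) : ℕ) = 0 := by
          rw [Fin.val_add_one]
          simp
        have hm : ((Fin.last m : Fin (m + 1)) : ℕ) = m := rfl
        rw [h0, hm, pow_zero, hgp]
      · have hv : ((i + 1 : Fin (m + 1)) : ℕ) = (i : ℕ) + 1 := by
          rw [Fin.val_add_one]
          simp [hi]
        rw [hv]
    have h2 : F (fun j => B (j - 1)) =
        ⋂ i : Fin (m + 1), ⇑(g ^ (((i + 1 : Fin (m + 1))) : ℕ)) '' B i := by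
      have hsurj : Function.Surjective (fun i : Fin (m + 1) => i + 1) :=
        fun j => ⟨j - 1, sub_add_cancel j 1⟩
      have hre := hsurj.iInter_comp fun j => ⇑(g ^ (j : ℕ)) '' B (j - 1)
      calc F (fun j => B (j - 1))
          = ⋂ j : Fin (m + 1), ⇑(g ^ (j : ℕ)) '' B (j - 1) := rfl
        _ = ⋂ i : Fin (m + 1),
              ⇑(g ^ (((i + 1 : Fin (m + 1))) : ℕ)) '' B (i + 1 - 1) := hre.symm
        _ = _ := Set.iInter_congr fun i => by rw [add_sub_cancel_right]
    rw [h1, h2]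
    exact (Set.iInter_congr hval).symm
  -- the block
  refine ⟨⟨Wb, ?_, ?_, ?_, ?_⟩, ?_, ?_⟩
  · -- isSubblock
    intro S hS
    obtain ⟨hne, B, hB, rfl⟩ := (hmem S).1 hS
    exact fact1 B hB hne
  · -- nonempty
    intro S hS
    exact ((hmem S).1 hS).1
  · -- pairwiseDisjoint
    intro S hS T hT hST
    obtain ⟨hne, B, hB, rfl⟩ := (hmem S).1 hS
    obtain ⟨hne', B', hB', rfl⟩ := (hmem T).1 hT
    simp only [Function.onFun, id_eq]
    rw [Set.disjoint_left]
    intro x hxS hxT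
    have hBB : B = B' := by
      funext i
      have hx1 : x ∈ ⇑(g ^ (i : ℕ)) '' B i := Set.mem_iInter.1 hxS i
      have hx2 : x ∈ ⇑(g ^ (i : ℕ)) '' B' i := Set.mem_iInter.1 hxT i
      obtain ⟨b, hb, hbx⟩ := hx1
      obtain ⟨b', hb', hbx'⟩ := hx2
      have : b = b' := (g ^ (i : ℕ)).injective (by rw [hbx, hbx'])
      subst this
      by_contra hne''
      exact Set.disjoint_left.1 (V.pairwiseDisjoint (hB i) (hB' i) hne'') hb hb'
    exact hST (by rw [hBB])
  · -- covers
    apply Set.eq_univ_of_forall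
    intro x
    have hcov : ∀ y : Fin n → Cantor, ∃ C ∈ V.blocks, y ∈ C := by
      intro y
      have : y ∈ ⋃₀ (V.blocks : Set (Set (Fin n → Cantor))) := V.covers ▸ Set.mem_univ y
      exact this
    choose C hC hyC using hcov
    set B : Fin (m + 1) → Set (Fin n → Cantor) := fun i => C ((g ^ (i : ℕ)).symm x) with hB
    have hxB : x ∈ F B := by
      rw [hF]
      refine Set.mem_iInter.2 fun i => ?_
      exact ⟨(g ^ (i : ℕ)).symm x, hyC _, (g ^ (i : ℕ)).apply_symm_apply x⟩
    exact ⟨F B, (hmem (F B)).2 ⟨⟨x, hxB⟩, B, fun i => hC _, rfl⟩, hxB⟩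
  · -- AdmissibleF g Wb
    intro S hS
    obtain ⟨hne, B, hB, rfl⟩ := (hmem S).1 hS
    obtain ⟨μ, hμ⟩ := fact1 B hB hne
    have hsub : F B ⊆ B 0 := by
      have h0 : F B ⊆ ⇑(g ^ ((0 : Fin (m + 1)) : ℕ)) '' B 0 := Set.iInter_subset _ 0
      simpa using h0
    obtain ⟨α, β, hα, hc⟩ := hV 1 (by omega) (B 0) (hB 0)
    rw [pow_one] at hc
    rw [hμ] at hsub
    rw [hα] at hsub
    obtain ⟨γ, rfl⟩ := exists_wcat_of_prodCylinder_subset hsub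
    exact ⟨wcat α γ, wcat β γ, hμ, mapsCanonically_wcat hc γ⟩
  · -- imageF g Wb = Wb
    apply Finset.ext
    intro S
    rw [mem_imageF]
    constructor
    · rintro ⟨T, hT, rfl⟩
      obtain ⟨hne, B, hB, rfl⟩ := (hmem T).1 hT
      rw [fact2 B]
      exact (hmem _).2 ⟨by rw [← fact2 B]; exact hne.image _,
        fun j => B (j - 1), fun j => hB _, rfl⟩
    · intro hS
      obtain ⟨hne, B'', hB'', rfl⟩ := (hmem S).1 hS
      set B : Fin (m + 1) → Set (Fin n → Cantor) := fun i => B'' (i + 1) with hBdef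
      have himg : ⇑g '' F B = F B'' := by
        rw [fact2 B]
        have hfe : (fun j : Fin (m + 1) => B (j - 1)) = B'' := by
          funext j
          show B'' (j - 1 + 1) = B'' j
          rw [sub_add_cancel]
        rw [hfe]
      have hTne : (F B).Nonempty := by
        obtain ⟨x, hx⟩ := hne
        rw [← himg] at hx
        obtain ⟨t, ht, -⟩ := hx
        exact ⟨t, ht⟩
      exact ⟨F B, (hmem (F B)).2 ⟨hTne, B, fun i => hB'' _, rfl⟩, himg⟩

end Final

/-- If `g ∈ nV` has finite order, then there exists a dyadic block `B` admissible
for `g` with `g(B) = B` (so `g` permutes the members of `B`). -/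
theorem torsion_has_invariant_block {n : ℕ} (g : Equiv.Perm (Fin n → Cantor))
    (hg : g ∈ BrinThompson n) (p : ℕ) (hp : orderOf g = p) (hpos : 0 < p) :
    ∃ B : DyadicBlock n, Invariant g B := by
  obtain ⟨m, rfl⟩ : ∃ m, p = m + 1 := ⟨p - 1, by omega⟩
  have hgp : g ^ (m + 1) = 1 := by rw [← hp]; exact pow_orderOf_eq_one g
  obtain ⟨X, hX⟩ := inBT_of_mem_closure hg
  obtain ⟨V, hV⟩ := powers_admissible X hX (m + 1)
  exact invariant_block_of_powers m hgp V hV
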